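/- arXiv:1406.0693 — 4 statements merged into one kernel-verified Lean document; each statement's English description precedes it below -/
import Mathlib

section
/- Let c > 0 and T > 0. Let y : ℝ → ℝ be differentiable and nonnegative on [0, ∞), let f : ℝ → ℝ be continuous and nonnegative on [0, ∞), and suppose that y'(t) + c·y(t) ≤ f(t) for all t ≥ 0. Let A ≥ 0 be such that ∫_{kT}^{(k+1)T} f(t) dt ≤ A for every k ∈ ℕ. Then for every k ∈ ℕ one has y(kT) ≤ A/(1 - e^{-cT}) + e^{-ckT}·y(0). -/
/-!
Multiplying by the integrating factor `exp (c t)` turns `y' + c y ≤ f` into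
`(exp (c t) y)' ≤ exp (c t) f`; integrating over one period `[kT, (k+1)T]` and bounding
`exp (c t) ≤ exp (c (k+1) T)` there gives `y ((k+1)T) ≤ q y (kT) + A` with `q = exp (-cT) < 1`.
Iterating this affine recursion yields `y (kT) ≤ A (1 + q + ⋯ + q^(k-1)) + q^k y 0`.
-/

open Real MeasureTheory intervalIntegral Set

theorem le_div_one_sub_add_pow_mul_of_le_mul_add {u : ℕ → ℝ} {q A : ℝ} (hq₀ : 0 ≤ q)
    (hq₁ : q < 1) (hA : 0 ≤ A) (hu : ∀ k, u (k + 1) ≤ q * u k + A) (k : ℕ) :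
    u k ≤ A / (1 - q) + q ^ k * u 0 := by
  have hq : 1 - q ≠ 0 := by linarith
  induction k with
  | zero => simpa using div_nonneg hA (sub_nonneg.mpr hq₁.le)
  | succ k ih =>
    calc u (k + 1) ≤ q * u k + A := hu k
      _ ≤ q * (A / (1 - q) + q ^ k * u 0) + A := by gcongr
      _ = A / (1 - q) + q ^ (k + 1) * u 0 := by field_simp; ring

section IntegratingFactor

variable {c a b : ℝ} {y y' f : ℝ → ℝ}

theorem exp_mul_sub_le_integral_of_deriv_add_mul_le (hab : a ≤ b)
    (hy : ContinuousOn y (Icc a b)) (hy' : ∀ t ∈ Ioo a b, HasDerivAt y (y' t) t)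
    (hf : IntegrableOn f (Icc a b)) (hineq : ∀ t ∈ Ioo a b, y' t + c * y t ≤ f t) :
    exp (c * b) * y b - exp (c * a) * y a ≤ ∫ t in a..b, exp (c * t) * f t := by
  have hexp : Continuous fun t => exp (c * t) := by fun_prop
  refine sub_le_integral_of_hasDeriv_right_of_le (g := fun t => exp (c * t) * y t)
    (g' := fun t => exp (c * t) * c * y t + exp (c * t) * y' t) hab (hexp.continuousOn.mul hy)
    (fun t ht => ?_) (hf.continuousOn_mul hexp.continuousOn isCompact_Icc) (fun t ht => ?_)
  · have hE : HasDerivAt (fun t => exp (c * t)) (exp (c * t) * c) t := by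
      simpa using ((hasDerivAt_id t).const_mul c).exp
    exact (hE.mul (hy' t ht)).hasDerivWithinAt
  · calc exp (c * t) * c * y t + exp (c * t) * y' t = exp (c * t) * (y' t + c * y t) := by ring
      _ ≤ exp (c * t) * f t := by gcongr; exact hineq t ht

theorem le_exp_mul_add_integral_of_deriv_add_mul_le (hc : 0 ≤ c) (hab : a ≤ b)
    (hy : ContinuousOn y (Icc a b)) (hy' : ∀ t ∈ Ioo a b, HasDerivAt y (y' t) t)
    (hf : IntegrableOn f (Icc a b)) (hf₀ : ∀ t ∈ Icc a b, 0 ≤ f t)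
    (hineq : ∀ t ∈ Ioo a b, y' t + c * y t ≤ f t) :
    y b ≤ exp (-c * (b - a)) * y a + ∫ t in a..b, f t := by
  have hfi : IntervalIntegrable f volume a b :=
    (intervalIntegrable_iff_integrableOn_Icc_of_le hab).mpr hf
  have hweight : ∫ t in a..b, exp (c * t) * f t ≤ exp (c * b) * ∫ t in a..b, f t := by
    rw [← intervalIntegral.integral_const_mul]
    refine integral_mono_on hab ?_ (hfi.const_mul _) fun t ht => ?_
    · exact (intervalIntegrable_iff_integrableOn_Icc_of_le hab).mpr
        (hf.continuousOn_mul (by fun_prop) isCompact_Icc)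
    · gcongr
      · exact hf₀ t ht
      · exact ht.2
  have hsplit : exp (c * a) = exp (-c * (b - a)) * exp (c * b) := by
    rw [← exp_add]; ring_nf
  have key := exp_mul_sub_le_integral_of_deriv_add_mul_le hab hy hy' hf hineq
  rw [hsplit] at key
  refine le_of_mul_le_mul_left ?_ (exp_pos (c * b))
  linarith

end IntegratingFactor

theorem decay_at_periods_general
    (c T : ℝ) (hc : 0 < c) (hT : 0 < T)
    (y f : ℝ → ℝ)
    (hy : DifferentiableOn ℝ y (Set.Ici 0))
    (hf : ContinuousOn f (Set.Ici 0))
    (hf0 : ∀ t : ℝ, 0 ≤ t → 0 ≤ f t)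
    (hineq : ∀ t : ℝ, 0 ≤ t → derivWithin y (Set.Ici 0) t + c * y t ≤ f t)
    (A : ℝ) (hA : 0 ≤ A)
    (hint : ∀ k : ℕ, (∫ t in (k * T)..((k + 1 : ℕ) * T), f t) ≤ A) :
    ∀ k : ℕ, y (k * T) ≤ A / (1 - Real.exp (-c * T)) + Real.exp (-c * (k * T)) * y 0 := by
  have hderiv : ∀ t > 0, HasDerivAt y (derivWithin y (Ici 0) t) t := fun t ht => by
    rw [derivWithin_of_mem_nhds (Ici_mem_nhds ht)]
    exact (hy.differentiableAt (Ici_mem_nhds ht)).hasDerivAt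
  have hperiod (k : ℕ) : y ((k + 1 : ℕ) * T) ≤ exp (-c * T) * y (k * T) + A := by
    have hk : (0 : ℝ) ≤ k * T := by positivity
    have hab : (k : ℝ) * T ≤ (k + 1 : ℕ) * T := by gcongr; simp
    have hsub : Icc ((k : ℝ) * T) ((k + 1 : ℕ) * T) ⊆ Ici 0 := fun t ht => hk.trans ht.1
    have hbound := le_exp_mul_add_integral_of_deriv_add_mul_le hc.le hab (hy.continuousOn.mono hsub)
      (fun t ht => hderiv t (hk.trans_lt ht.1)) ((hf.mono hsub).integrableOn_Icc)
      (fun t ht => hf0 t (hsub ht)) (fun t ht => hineq t (hk.trans ht.1.le))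
    have hlen : ((k + 1 : ℕ) : ℝ) * T - k * T = T := by push_cast; ring
    rw [hlen] at hbound
    linarith [hint k]
  intro k
  have hpow : exp (-c * (k * T)) = exp (-c * T) ^ k := by
    rw [← exp_nat_mul]; ring_nf
  have hq : exp (-c * T) < 1 := exp_lt_one_iff.mpr (by nlinarith)
  rw [hpow]
  simpa only [Nat.cast_zero, zero_mul] using
    le_div_one_sub_add_pow_mul_of_le_mul_add (u := fun k : ℕ => y (k * T)) (exp_pos _).le hq hA
      hperiod k

/-- Differential-inequality core of Lemma 3.1, estimate (3.1). -/
theorem decay_at_periods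
    (c T : ℝ) (hc : 0 < c) (hT : 0 < T)
    (y f : ℝ → ℝ)
    (hy : DifferentiableOn ℝ y (Set.Ici 0))
    (hy0 : ∀ t : ℝ, 0 ≤ t → 0 ≤ y t)
    (hf : ContinuousOn f (Set.Ici 0))
    (hf0 : ∀ t : ℝ, 0 ≤ t → 0 ≤ f t)
    (hineq : ∀ t : ℝ, 0 ≤ t → derivWithin y (Set.Ici 0) t + c * y t ≤ f t)
    (A : ℝ) (hA : 0 ≤ A)
    (hint : ∀ k : ℕ, (∫ t in (k * T)..((k + 1 : ℕ) * T), f t) ≤ A) :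
    ∀ k : ℕ, y (k * T) ≤ A / (1 - Real.exp (-c * T)) + Real.exp (-c * (k * T)) * y 0 :=
  decay_at_periods_general c T hc hT y f hy hf hf0 hineq A hA hint
end

section
/- Let c₁, c₂, T > 0. Let y, z, f : ℝ → ℝ be functions on [0, ∞) with y differentiable, z and f continuous, 0 ≤ y(t) ≤ z(t) and f(t) ≥ 0 for all t ≥ 0, and suppose that y'(t) + c₁·z(t) ≤ c₂·y(t)² + c₂·f(t) for all t ≥ 0. Let M, F ≥ 0 be such that ∫_{kT}^{(k+1)T} y(t) dt ≤ M and ∫_{kT}^{(k+1)T} f(t) dt ≤ F for every k ∈ ℕ, and assume c₂·M ≤ c₁·T/2. Define A₄ = c₂·e^{c₂M}·F and A₅ = A₄/(1 - e^{-c₁T/2}) + y(0). Then: (i) y(kT) ≤ A₅ for every k ∈ ℕ; (ii) y(t) ≤ A₄ + e^{c₂M}·A₅ for every t ≥ 0; (iii) for every k ∈ ℕ and t ∈ [kT, (k+1)T], y(t) + c₁·∫_{kT}^{t} z(s) ds ≤ c₂·(A₄ + e^{c₂M}·A₅)·M + c₂·F + A₅. -/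
open Real MeasureTheory intervalIntegral Set

/-!
Since `y ≤ z`, the inequality gives `y' ≤ (c₂ y - c₁) y + c₂ f`. On a period `[kT, t]` the
integrating factor `exp (c₁ (t - kT) - c₂ ∫ y)` turns this into
`y t ≤ y (kT) exp (c₂ M - c₁ (t - kT)) + A₄`. At `t = (k + 1) T` the assumption `c₂ M ≤ c₁ T / 2`
makes the factor at most `q = exp (-c₁ T / 2) < 1`, so `y ((k + 1) T) ≤ q y (kT) + A₄`, and the
values `y (kT)` stay below `A₄ / (1 - q) + y 0 = A₅`; this is (i), and (ii) follows from the period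
estimate. For (iii), integrate the original inequality over `[kT, t]`, using `y² ≤ B y` with the
bound `B` of (ii).
-/

theorem ContinuousOn.continuousOn_primitive_Icc {g : ℝ → ℝ} {a b : ℝ} (hab : a ≤ b)
    (hg : ContinuousOn g (Icc a b)) : ContinuousOn (fun x => ∫ s in a..x, g s) (Icc a b) := by
  have h := continuousOn_primitive_interval (μ := volume) (f := g) (a := a) (b := b)
    (by rw [uIcc_of_le hab]; exact hg.integrableOn_Icc)
  rwa [uIcc_of_le hab] at h

theorem ContinuousOn.hasDerivAt_primitive {g : ℝ → ℝ} {a b t : ℝ} (hg : ContinuousOn g (Icc a b))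
    (ht : t ∈ Ioo a b) : HasDerivAt (fun x => ∫ s in a..x, g s) (g t) t := by
  have hmem : Icc a b ∈ nhds t := Icc_mem_nhds ht.1 ht.2
  exact integral_hasDerivAt_right
    ((hg.mono (Icc_subset_Icc_right ht.2.le)).intervalIntegrable_of_Icc ht.1.le)
    ⟨Icc a b, hmem, hg.aestronglyMeasurable measurableSet_Icc⟩ (hg.continuousAt hmem)

theorem integral_mono_interval_of_nonneg {g : ℝ → ℝ} (hg : ContinuousOn g (Ici 0))
    (hg0 : ∀ t, 0 ≤ t → 0 ≤ g t) {a s t b : ℝ} (ha : 0 ≤ a) (has : a ≤ s) (hst : s ≤ t)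
    (htb : t ≤ b) : ∫ r in s..t, g r ≤ ∫ r in a..b, g r := by
  have hsub : Icc a b ⊆ Ici 0 := fun r hr => ha.trans hr.1
  exact integral_mono_interval has hst htb
    (ae_restrict_of_forall_mem measurableSet_Ioc fun r hr => hg0 r (ha.trans hr.1.le))
    ((hg.mono hsub).intervalIntegrable_of_Icc ((has.trans hst).trans htb))

theorem le_mul_exp_integral_add_of_hasDerivAt_le {u u' p g : ℝ → ℝ} {a b K : ℝ} (hab : a ≤ b)
    (hu : ContinuousOn u (Icc a b)) (hu' : ∀ t ∈ Ioo a b, HasDerivAt u (u' t) t)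
    (hp : ContinuousOn p (Icc a b)) (hg : ContinuousOn g (Icc a b))
    (hg0 : ∀ t ∈ Icc a b, 0 ≤ g t) (hK : ∀ s ∈ Icc a b, ∫ r in s..b, p r ≤ K)
    (hineq : ∀ t ∈ Ioo a b, u' t ≤ p t * u t + g t) :
    u b ≤ u a * exp (∫ r in a..b, p r) + exp K * ∫ r in a..b, g r := by
  set P : ℝ → ℝ := fun t => ∫ r in a..t, p r
  have hPc : ContinuousOn P (Icc a b) := hp.continuousOn_primitive_Icc hab
  have hpi : ∀ s ∈ Icc a b, IntervalIntegrable p volume a s := fun s hs =>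
    (hp.mono (Icc_subset_Icc_right hs.2)).intervalIntegrable_of_Icc hs.1
  have hfactor : u b * exp (-P b) - u a ≤ ∫ s in a..b, g s * exp (-P s) := by
    have h := sub_le_integral_of_hasDeriv_right_of_le hab (hu.mul hPc.neg.rexp)
      (fun t ht => ((hu' t ht).mul (hp.hasDerivAt_primitive ht).neg.exp).hasDerivWithinAt)
      (hg.mul hPc.neg.rexp).integrableOn_Icc fun t ht => by
        show u' t * exp (-P t) + u t * (exp (-P t) * -p t) ≤ g t * exp (-P t)
        linarith [mul_le_mul_of_nonneg_right (hineq t ht) (exp_pos (-P t)).le]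
    simpa [P] using h
  have hweight : ∀ s ∈ Icc a b, g s * exp (-P s) ≤ g s * exp (K - P b) := fun s hs => by
    have hPs : P b - P s = ∫ r in s..b, p r :=
      integral_interval_sub_left (hpi b (right_mem_Icc.2 hab)) (hpi s hs)
    gcongr
    · exact hg0 s hs
    · linarith [hK s hs]
  have hforcing : ∫ s in a..b, g s * exp (-P s) ≤ exp (K - P b) * ∫ s in a..b, g s := by
    rw [← intervalIntegral.integral_const_mul]
    refine integral_mono_on hab ((hg.mul hPc.neg.rexp).intervalIntegrable_of_Icc hab)
      ((continuousOn_const.mul hg).intervalIntegrable_of_Icc hab) fun s hs => ?_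
    linarith [hweight s hs]
  calc u b = u b * exp (-P b) * exp (P b) := by rw [mul_assoc, ← exp_add]; simp
    _ ≤ (u a + exp (K - P b) * ∫ s in a..b, g s) * exp (P b) := by gcongr; linarith
    _ = u a * exp (P b) + exp K * ∫ s in a..b, g s := by
      rw [sub_eq_add_neg, exp_add, exp_neg]; field_simp

theorem le_div_one_sub_add_of_le_mul_add {x : ℕ → ℝ} {q A : ℝ} (hq0 : 0 ≤ q) (hq1 : q < 1)
    (hA : 0 ≤ A) (hx0 : 0 ≤ x 0) (hx : ∀ k, x (k + 1) ≤ q * x k + A) (k : ℕ) :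
    x k ≤ A / (1 - q) + x 0 := by
  induction k with
  | zero => linarith [div_nonneg hA (sub_pos.2 hq1).le]
  | succ k ih =>
    have hgeom : q * (A / (1 - q)) + A = A / (1 - q) := by
      field_simp [(sub_pos.2 hq1).ne']; ring
    have hx0q : q * x 0 ≤ x 0 := mul_le_of_le_one_left hx0 hq1.le
    linarith [hx k, mul_le_mul_of_nonneg_left ih hq0]

section RiccatiInequality

variable {c₁ c₂ : ℝ} {y z f : ℝ → ℝ}

theorem hasDerivAt_derivWithin_Ici (hy : DifferentiableOn ℝ y (Ici 0)) {t : ℝ} (ht : 0 < t) :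
    HasDerivAt y (derivWithin y (Ici 0) t) t :=
  (hy t ht.le).hasDerivWithinAt.hasDerivAt (Ici_mem_nhds ht)

theorem le_mul_exp_add_of_derivWithin_le (hc₁ : 0 ≤ c₁) (hc₂ : 0 ≤ c₂)
    (hy : DifferentiableOn ℝ y (Ici 0)) (hf : ContinuousOn f (Ici 0))
    (hy0 : ∀ t, 0 ≤ t → 0 ≤ y t) (hf0 : ∀ t, 0 ≤ t → 0 ≤ f t)
    (hineq : ∀ t, 0 ≤ t → derivWithin y (Ici 0) t ≤ (c₂ * y t - c₁) * y t + c₂ * f t)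
    {a t M F : ℝ} (ha : 0 ≤ a) (hat : a ≤ t)
    (hM : ∫ s in a..t, y s ≤ M) (hF : ∫ s in a..t, f s ≤ F) :
    y t ≤ y a * exp (c₂ * M - c₁ * (t - a)) + c₂ * exp (c₂ * M) * F := by
  have hS : Icc a t ⊆ Ici 0 := fun s hs => ha.trans hs.1
  have hyc : ContinuousOn y (Icc a t) := hy.continuousOn.mono hS
  have hexponent : ∀ s ∈ Icc a t,
      ∫ r in s..t, (c₂ * y r - c₁) = c₂ * (∫ r in s..t, y r) - c₁ * (t - s) := fun s hs => by
    have hyi : IntervalIntegrable y volume s t :=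
      (hyc.mono (Icc_subset_Icc_left hs.1)).intervalIntegrable_of_Icc hs.2
    rw [integral_sub (hyi.const_mul c₂) intervalIntegrable_const,
      intervalIntegral.integral_const_mul, intervalIntegral.integral_const, smul_eq_mul]
    ring
  have hyM : ∀ s ∈ Icc a t, ∫ r in s..t, y r ≤ M := fun s hs =>
    (integral_mono_interval_of_nonneg hy.continuousOn hy0 ha hs.1 hs.2 le_rfl).trans hM
  have hgronwall := le_mul_exp_integral_add_of_hasDerivAt_le
    (p := fun s => c₂ * y s - c₁) (g := fun s => c₂ * f s) (K := c₂ * M) hat hyc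
    (fun s hs => hasDerivAt_derivWithin_Ici hy (ha.trans_lt hs.1))
    ((continuousOn_const.mul hyc).sub continuousOn_const) (continuousOn_const.mul (hf.mono hS))
    (fun s hs => mul_nonneg hc₂ (hf0 s (hS hs)))
    (fun s hs => by
      have h1 := mul_le_mul_of_nonneg_left (hyM s hs) hc₂
      have h2 := mul_nonneg hc₁ (sub_nonneg.2 hs.2)
      rw [hexponent s hs]
      linarith)
    (fun s hs => hineq s (hS (Ioo_subset_Icc_self hs)))
  rw [hexponent a (left_mem_Icc.2 hat), intervalIntegral.integral_const_mul] at hgronwall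
  calc y t ≤ y a * exp (c₂ * (∫ s in a..t, y s) - c₁ * (t - a))
        + exp (c₂ * M) * (c₂ * ∫ s in a..t, f s) := hgronwall
    _ ≤ y a * exp (c₂ * M - c₁ * (t - a)) + exp (c₂ * M) * (c₂ * F) := by
      have := hy0 a ha
      gcongr
    _ = y a * exp (c₂ * M - c₁ * (t - a)) + c₂ * exp (c₂ * M) * F := by ring

theorem add_integral_le_of_derivWithin_le (hc₂ : 0 ≤ c₂) (hy : DifferentiableOn ℝ y (Ici 0))
    (hz : ContinuousOn z (Ici 0)) (hf : ContinuousOn f (Ici 0))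
    (hineq : ∀ t : ℝ, 0 ≤ t →
      derivWithin y (Ici 0) t + c₁ * z t ≤ c₂ * (y t) ^ 2 + c₂ * f t)
    {a t B : ℝ} (ha : 0 ≤ a) (hat : a ≤ t) (hyB : ∀ s ∈ Icc a t, 0 ≤ y s ∧ y s ≤ B) :
    y t + c₁ * ∫ s in a..t, z s
      ≤ y a + c₂ * B * (∫ s in a..t, y s) + c₂ * ∫ s in a..t, f s := by
  have hS : Icc a t ⊆ Ici 0 := fun s hs => ha.trans hs.1
  have hyc : ContinuousOn y (Icc a t) := hy.continuousOn.mono hS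
  have hzc : ContinuousOn z (Icc a t) := hz.mono hS
  have hfc : ContinuousOn f (Icc a t) := hf.mono hS
  have h := sub_le_integral_of_hasDeriv_right_of_le
    (φ := fun s => c₂ * B * y s + c₂ * f s - c₁ * z s) hat hyc
    (fun s hs => (hasDerivAt_derivWithin_Ici hy (ha.trans_lt hs.1)).hasDerivWithinAt)
    (((continuousOn_const.mul hyc).add (continuousOn_const.mul hfc)).sub
      (continuousOn_const.mul hzc)).integrableOn_Icc
    fun s hs => by
      obtain ⟨hy0, hyB⟩ := hyB s (Ioo_subset_Icc_self hs)
      have hsq : c₂ * y s ^ 2 ≤ c₂ * B * y s := by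
        rw [mul_assoc, sq]; gcongr
      linarith [hineq s (hS (Ioo_subset_Icc_self hs))]
  have hyi : IntervalIntegrable y volume a t := hyc.intervalIntegrable_of_Icc hat
  have hfi : IntervalIntegrable f volume a t := hfc.intervalIntegrable_of_Icc hat
  have hzi : IntervalIntegrable z volume a t := hzc.intervalIntegrable_of_Icc hat
  rw [integral_sub ((hyi.const_mul _).add (hfi.const_mul _)) (hzi.const_mul _),
    integral_add (hyi.const_mul _) (hfi.const_mul _), intervalIntegral.integral_const_mul,
    intervalIntegral.integral_const_mul, intervalIntegral.integral_const_mul] at h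
  linarith

end RiccatiInequality

theorem mem_Icc_floor_div_mul {t T : ℝ} (ht : 0 ≤ t) (hT : 0 < T) :
    t ∈ Icc ((⌊t / T⌋₊ : ℝ) * T) (((⌊t / T⌋₊ : ℝ) + 1) * T) :=
  ⟨(le_div_iff₀ hT).1 (Nat.floor_le (div_nonneg ht hT.le)),
    ((div_lt_iff₀ hT).1 (Nat.lt_floor_add_one (t / T))).le⟩

section PeriodBound

variable {y : ℝ → ℝ} {c₁ L T A : ℝ}

theorem le_div_one_sub_exp_add_of_period_bound (hc₁ : 0 < c₁) (hT : 0 < T)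
    (hL : L ≤ c₁ * T / 2) (hA : 0 ≤ A) (hy0 : ∀ t, 0 ≤ t → 0 ≤ y t)
    (hperiod : ∀ k : ℕ, ∀ t ∈ Icc ((k : ℝ) * T) (((k : ℝ) + 1) * T),
      y t ≤ y (k * T) * exp (L - c₁ * (t - k * T)) + A) (k : ℕ) :
    y (k * T) ≤ A / (1 - exp (-c₁ * T / 2)) + y 0 := by
  have hstep : ∀ k : ℕ, y ((k + 1 : ℕ) * T) ≤ exp (-c₁ * T / 2) * y (k * T) + A := fun k => by
    have hkT : 0 ≤ (k : ℝ) * T := by positivity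
    have hexp : exp (L - c₁ * ((k + 1) * T - k * T)) ≤ exp (-c₁ * T / 2) :=
      exp_le_exp.2 (by nlinarith)
    push_cast
    nlinarith [hperiod k ((k + 1) * T) (right_mem_Icc.2 (by nlinarith)),
      mul_le_mul_of_nonneg_left hexp (hy0 _ hkT)]
  simpa using le_div_one_sub_add_of_le_mul_add (x := fun k : ℕ => y (k * T)) (exp_pos _).le
    (exp_lt_one_iff.2 (by nlinarith)) hA (by simpa using hy0 0 le_rfl) hstep k

theorem le_add_exp_mul_of_period_bound (hc₁ : 0 ≤ c₁) (hT : 0 < T) {B : ℝ} (hB : 0 ≤ B)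
    (hperiod : ∀ k : ℕ, ∀ t ∈ Icc ((k : ℝ) * T) (((k : ℝ) + 1) * T),
      y t ≤ y (k * T) * exp (L - c₁ * (t - k * T)) + A)
    (hyB : ∀ k : ℕ, y (k * T) ≤ B) {t : ℝ} (ht : 0 ≤ t) : y t ≤ A + exp L * B := by
  have hk := mem_Icc_floor_div_mul ht hT
  have hexp : exp (L - c₁ * (t - ⌊t / T⌋₊ * T)) ≤ exp L :=
    exp_le_exp.2 (by nlinarith [hk.1])
  calc y t ≤ y (⌊t / T⌋₊ * T) * exp (L - c₁ * (t - ⌊t / T⌋₊ * T)) + A := hperiod _ t hk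
    _ ≤ B * exp L + A := by gcongr; exact hyB _
    _ = A + exp L * B := by ring

end PeriodBound

theorem lemma32_core_general
    (c₁ c₂ T : ℝ) (hc₁ : 0 < c₁) (hc₂ : 0 < c₂) (hT : 0 < T)
    (y z f : ℝ → ℝ)
    (hy : DifferentiableOn ℝ y (Set.Ici 0))
    (hz : ContinuousOn z (Set.Ici 0))
    (hf : ContinuousOn f (Set.Ici 0))
    (hyz : ∀ t : ℝ, 0 ≤ t → 0 ≤ y t ∧ y t ≤ z t)
    (hf0 : ∀ t : ℝ, 0 ≤ t → 0 ≤ f t)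
    (hineq : ∀ t : ℝ, 0 ≤ t →
      derivWithin y (Set.Ici 0) t + c₁ * z t ≤ c₂ * (y t) ^ 2 + c₂ * f t)
    (M F : ℝ) (hF : 0 ≤ F)
    (hinty : ∀ k : ℕ, (∫ t in (k * T)..((k + 1 : ℕ) * T), y t) ≤ M)
    (hintf : ∀ k : ℕ, (∫ t in (k * T)..((k + 1 : ℕ) * T), f t) ≤ F)
    (hlarge : c₂ * M ≤ c₁ * T / 2)
    (A₄ A₅ : ℝ)
    (hA₄ : A₄ = c₂ * Real.exp (c₂ * M) * F)
    (hA₅ : A₅ = A₄ / (1 - Real.exp (-c₁ * T / 2)) + y 0) :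
    (∀ k : ℕ, y (k * T) ≤ A₅) ∧
    (∀ t : ℝ, 0 ≤ t → y t ≤ A₄ + Real.exp (c₂ * M) * A₅) ∧
    (∀ k : ℕ, ∀ t ∈ Set.Icc ((k : ℝ) * T) (((k : ℝ) + 1) * T),
      y t + c₁ * (∫ s in ((k : ℝ) * T)..t, z s)
        ≤ c₂ * (A₄ + Real.exp (c₂ * M) * A₅) * M + c₂ * F + A₅) := by
  have hy0 : ∀ t : ℝ, 0 ≤ t → 0 ≤ y t := fun t ht => (hyz t ht).1
  have hdecay : ∀ t : ℝ, 0 ≤ t →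
      derivWithin y (Ici 0) t ≤ (c₂ * y t - c₁) * y t + c₂ * f t := fun t ht => by
    nlinarith [hineq t ht, mul_le_mul_of_nonneg_left (hyz t ht).2 hc₁.le]
  have hkT : ∀ k : ℕ, 0 ≤ (k : ℝ) * T := fun k => by positivity
  have hyM : ∀ k : ℕ, ∀ t ∈ Icc ((k : ℝ) * T) (((k : ℝ) + 1) * T), ∫ s in (k * T)..t, y s ≤ M :=
    fun k t ht => (integral_mono_interval_of_nonneg hy.continuousOn hy0 (hkT k) le_rfl ht.1
      ht.2).trans (by exact_mod_cast hinty k)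
  have hfF : ∀ k : ℕ, ∀ t ∈ Icc ((k : ℝ) * T) (((k : ℝ) + 1) * T), ∫ s in (k * T)..t, f s ≤ F :=
    fun k t ht => (integral_mono_interval_of_nonneg hf hf0 (hkT k) le_rfl ht.1 ht.2).trans
      (by exact_mod_cast hintf k)
  have hperiod : ∀ k : ℕ, ∀ t ∈ Icc ((k : ℝ) * T) (((k : ℝ) + 1) * T),
      y t ≤ y (k * T) * exp (c₂ * M - c₁ * (t - k * T)) + A₄ := fun k t ht => by
    rw [hA₄]
    exact le_mul_exp_add_of_derivWithin_le hc₁.le hc₂.le hy hf hy0 hf0 hdecay (hkT k) ht.1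
      (hyM k t ht) (hfF k t ht)
  have hgrid : ∀ k : ℕ, y (k * T) ≤ A₅ := fun k => hA₅ ▸
    le_div_one_sub_exp_add_of_period_bound hc₁ hT hlarge (by rw [hA₄]; positivity) hy0 hperiod k
  have hbounded : ∀ t : ℝ, 0 ≤ t → y t ≤ A₄ + exp (c₂ * M) * A₅ := fun t ht =>
    le_add_exp_mul_of_period_bound hc₁.le hT ((hy0 0 le_rfl).trans (by simpa using hgrid 0))
      hperiod hgrid ht
  refine ⟨hgrid, hbounded, fun k t ht => ?_⟩
  have hB : 0 ≤ c₂ * (A₄ + exp (c₂ * M) * A₅) :=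
    mul_nonneg hc₂.le ((hy0 0 le_rfl).trans (hbounded 0 le_rfl))
  have h := add_integral_le_of_derivWithin_le hc₂.le hy hz hf hineq (hkT k) ht.1
    fun s hs => ⟨hy0 s ((hkT k).trans hs.1), hbounded s ((hkT k).trans hs.1)⟩
  linarith [mul_le_mul_of_nonneg_left (hyM k t ht) hB,
    mul_le_mul_of_nonneg_left (hfF k t ht) hc₂.le, hgrid k]

/-- Differential-inequality core of Lemma 3.2. -/
theorem lemma32_core
    (c₁ c₂ T : ℝ) (hc₁ : 0 < c₁) (hc₂ : 0 < c₂) (hT : 0 < T)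
    (y z f : ℝ → ℝ)
    (hy : DifferentiableOn ℝ y (Set.Ici 0))
    (hz : ContinuousOn z (Set.Ici 0))
    (hf : ContinuousOn f (Set.Ici 0))
    (hyz : ∀ t : ℝ, 0 ≤ t → 0 ≤ y t ∧ y t ≤ z t)
    (hf0 : ∀ t : ℝ, 0 ≤ t → 0 ≤ f t)
    (hineq : ∀ t : ℝ, 0 ≤ t →
      derivWithin y (Set.Ici 0) t + c₁ * z t ≤ c₂ * (y t) ^ 2 + c₂ * f t)
    (M F : ℝ) (hM : 0 ≤ M) (hF : 0 ≤ F)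
    (hinty : ∀ k : ℕ, (∫ t in (k * T)..((k + 1 : ℕ) * T), y t) ≤ M)
    (hintf : ∀ k : ℕ, (∫ t in (k * T)..((k + 1 : ℕ) * T), f t) ≤ F)
    (hlarge : c₂ * M ≤ c₁ * T / 2)
    (A₄ A₅ : ℝ)
    (hA₄ : A₄ = c₂ * Real.exp (c₂ * M) * F)
    (hA₅ : A₅ = A₄ / (1 - Real.exp (-c₁ * T / 2)) + y 0) :
    (∀ k : ℕ, y (k * T) ≤ A₅) ∧
    (∀ t : ℝ, 0 ≤ t → y t ≤ A₄ + Real.exp (c₂ * M) * A₅) ∧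
    (∀ k : ℕ, ∀ t ∈ Set.Icc ((k : ℝ) * T) (((k : ℝ) + 1) * T),
      y t + c₁ * (∫ s in ((k : ℝ) * T)..t, z s)
        ≤ c₂ * (A₄ + Real.exp (c₂ * M) * A₅) * M + c₂ * F + A₅) :=
  lemma32_core_general c₁ c₂ T hc₁ hc₂ hT y z f hy hz hf hyz hf0 hineq M F hF hinty hintf hlarge A₄
    A₅ hA₄ hA₅
end

section
/- Let c₁, c₂, T > 0 with e^{-c₁T/2} ≤ 1/2. Let y, z, w, h : ℝ → ℝ be functions on [0, ∞) with y differentiable, z, w, h continuous, 0 ≤ y(t) ≤ z(t), w(t) ≥ 0 and h(t) ≥ 0 for all t ≥ 0, and suppose that y'(t) + c₁·z(t) ≤ c₂·w(t)·y(t) + h(t) for all t ≥ 0. Let M, H ≥ 0 be such that ∫_{kT}^{(k+1)T} w(t) dt ≤ M and ∫_{kT}^{(k+1)T} h(t) dt ≤ H for every k ∈ ℕ, and assume c₂·M ≤ c₁·T/2. Define B = 2·e^{c₂M}·H + y(0). Then: (i) y(kT) ≤ B for every k ∈ ℕ; (ii) y(t) ≤ e^{c₂M}·(H + B) for every t ≥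 0; (iii) for every k ∈ ℕ and t ∈ [kT, (k+1)T], y(t) + c₁·∫_{kT}^{t} z(s) ds ≤ c₂·M·e^{c₂M}·(H + B) + H + B. -/
open Real MeasureTheory intervalIntegral Set

/-!
On a period `[a, b] = [kT, (k+1)T]` and for `0 ≤ λ ≤ c₁`, the inequality implies
`y' ≤ (c₂ w - λ) y + h` (as `λ y ≤ c₁ z`), and Gronwall's inequality gives
`y t ≤ exp (c₂ M - λ (t - a)) y a + exp (c₂ M) H`.
Taking `λ = c₁`, `t = b` and using `c₂ M ≤ c₁ T / 2`, the factor in front of `y a` is at most `1/2`,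
so `y` at the nodes stays below `B` by induction; taking `λ = 0` bounds `y` on the whole period.
Integrating the inequality over a period, with this bound on `y` in the term `c₂ w y`, gives the
estimate on `y t + c₁ ∫ z`.
-/

theorem hasDerivAt_integral_of_continuousOn {f : ℝ → ℝ} {a b t : ℝ}
    (hf : ContinuousOn f (Icc a b)) (ht : t ∈ Ioo a b) :
    HasDerivAt (fun u => ∫ s in a..u, f s) (f t) t :=
  integral_hasDerivAt_right
    ((hf.mono (Icc_subset_Icc_right ht.2.le)).intervalIntegrable_of_Icc ht.1.le)
    ((hf.mono Ioo_subset_Icc_self).stronglyMeasurableAtFilter isOpen_Ioo t ht)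
    (hf.continuousAt (Icc_mem_nhds ht.1 ht.2))

theorem integral_mono_interval_of_continuousOn {f : ℝ → ℝ} {a b s t : ℝ}
    (hf : ContinuousOn f (Icc a b)) (hf0 : ∀ x ∈ Icc a b, 0 ≤ f x)
    (has : a ≤ s) (hst : s ≤ t) (htb : t ≤ b) :
    ∫ x in s..t, f x ≤ ∫ x in a..b, f x :=
  integral_mono_interval has hst htb
    ((ae_restrict_iff' measurableSet_Ioc).2
      (ae_of_all _ fun x hx => hf0 x (Ioc_subset_Icc_self hx)))
    (hf.intervalIntegrable_of_Icc (has.trans (hst.trans htb)))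

theorem exists_nat_mem_Icc_mul {T t : ℝ} (hT : 0 < T) (ht : 0 ≤ t) :
    ∃ k : ℕ, t ∈ Icc ((k : ℝ) * T) (((k : ℝ) + 1) * T) :=
  ⟨⌊t / T⌋₊, (le_div_iff₀ hT).1 (Nat.floor_le (div_nonneg ht hT.le)),
    (div_le_iff₀ hT).1 (Nat.lt_floor_add_one _).le⟩

-- Gronwall's inequality, via the integrating factor `exp (-∫ r in a..u, φ r)`.
theorem le_exp_integral_mul_add_exp_mul_integral {y y' φ h : ℝ → ℝ} {a b K : ℝ} (hab : a ≤ b)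
    (hy : ContinuousOn y (Icc a b)) (hy' : ∀ t ∈ Ioo a b, HasDerivAt y (y' t) t)
    (hφ : ContinuousOn φ (Icc a b)) (hh : ContinuousOn h (Icc a b))
    (hh0 : ∀ t ∈ Icc a b, 0 ≤ h t) (hK : ∀ s ∈ Icc a b, ∫ r in s..b, φ r ≤ K)
    (hle : ∀ t ∈ Ioo a b, y' t ≤ φ t * y t + h t) :
    y b ≤ exp (∫ r in a..b, φ r) * y a + exp K * ∫ s in a..b, h s := by
  set Φ : ℝ → ℝ := fun u => ∫ r in a..u, φ r
  have hΦ : ContinuousOn Φ (Icc a b) := by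
    have := continuousOn_primitive_interval (μ := volume) (a := a) (b := b)
      (by rw [uIcc_of_le hab]; exact hφ.integrableOn_Icc)
    rwa [uIcc_of_le hab] at this
  have hkernel : ContinuousOn (fun s => exp (-Φ s) * h s) (Icc a b) := hΦ.neg.rexp.mul hh
  have hintegrating : exp (-Φ b) * y b - exp (-Φ a) * y a ≤ ∫ s in a..b, exp (-Φ s) * h s := by
    have hderiv : ∀ t ∈ Ioo a b, HasDerivAt (fun u => exp (-Φ u) * y u)
        (exp (-Φ t) * -φ t * y t + exp (-Φ t) * y' t) t := fun t ht =>
      (hasDerivAt_integral_of_continuousOn hφ ht).neg.exp.mul (hy' t ht)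
    refine sub_le_integral_of_hasDeriv_right_of_le hab (hΦ.neg.rexp.mul hy)
      (fun t ht => (hderiv t ht).hasDerivWithinAt) hkernel.integrableOn_Icc fun t ht => ?_
    have := mul_le_mul_of_nonneg_left (hle t ht) (exp_pos (-Φ t)).le
    linarith
  have hkernel_le : ∫ s in a..b, exp (-Φ s) * h s ≤ exp (K - Φ b) * ∫ s in a..b, h s := by
    rw [← intervalIntegral.integral_const_mul]
    refine integral_mono_on hab (hkernel.intervalIntegrable_of_Icc hab)
      ((hh.intervalIntegrable_of_Icc hab).const_mul _) fun s hs => ?_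
    have hΦs : Φ b - Φ s = ∫ r in s..b, φ r :=
      integral_interval_sub_left (hφ.intervalIntegrable_of_Icc hab)
        ((hφ.mono (Icc_subset_Icc_right hs.2)).intervalIntegrable_of_Icc hs.1)
    exact mul_le_mul_of_nonneg_right (exp_le_exp.2 (by linarith [hK s hs])) (hh0 s hs)
  have hΦa : Φ a = 0 := integral_same
  rw [hΦa, neg_zero, exp_zero, one_mul] at hintegrating
  have hmain : exp (-Φ b) * y b ≤ y a + exp (K - Φ b) * ∫ s in a..b, h s := by linarith
  calc y b = exp (Φ b) * (exp (-Φ b) * y b) := by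
        rw [← mul_assoc, ← exp_add, add_neg_cancel, exp_zero, one_mul]
    _ ≤ exp (Φ b) * (y a + exp (K - Φ b) * ∫ s in a..b, h s) := by gcongr
    _ = exp (Φ b) * y a + exp K * ∫ s in a..b, h s := by
        rw [mul_add, ← mul_assoc, ← exp_add, add_sub_cancel]

theorem le_exp_mul_add_exp_mul_of_derivWithin_le {c₁ c₂ M H a b t lam : ℝ} {y z w h : ℝ → ℝ}
    (hc₂ : 0 ≤ c₂)
    (hy : DifferentiableOn ℝ y (Ici 0))
    (hw : ContinuousOn w (Ici 0))
    (hh : ContinuousOn h (Ici 0))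
    (hyz : ∀ t : ℝ, 0 ≤ t → 0 ≤ y t ∧ y t ≤ z t)
    (hw0 : ∀ t : ℝ, 0 ≤ t → 0 ≤ w t)
    (hh0 : ∀ t : ℝ, 0 ≤ t → 0 ≤ h t)
    (hineq : ∀ t : ℝ, 0 ≤ t →
      derivWithin y (Ici 0) t + c₁ * z t ≤ c₂ * w t * y t + h t)
    (ha : 0 ≤ a) (ht : t ∈ Icc a b)
    (hintw : ∫ s in a..b, w s ≤ M) (hinth : ∫ s in a..b, h s ≤ H)
    (hlam : 0 ≤ lam) (hlamc : lam ≤ c₁) :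
    y t ≤ exp (c₂ * M - lam * (t - a)) * y a + exp (c₂ * M) * H := by
  have hab : Icc a b ⊆ Ici 0 := fun s hs => ha.trans hs.1
  have hat : Icc a t ⊆ Ici 0 := fun s hs => ha.trans hs.1
  have hexponent : ∀ s ∈ Icc a t, ∫ r in s..t, (c₂ * w r - lam) ≤ c₂ * M - lam * (t - s) := by
    intro s hs
    have hwi : IntervalIntegrable w volume s t :=
      (hw.mono fun r hr => hs.1.trans hr.1 |>.trans' ha).intervalIntegrable_of_Icc hs.2
    rw [integral_sub (hwi.const_mul c₂) intervalIntegrable_const,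
      intervalIntegral.integral_const_mul, intervalIntegral.integral_const, smul_eq_mul]
    have := integral_mono_interval_of_continuousOn (hw.mono hab) (fun r hr => hw0 r (hab hr))
      hs.1 hs.2 ht.2
    nlinarith
  have hgronwall := le_exp_integral_mul_add_exp_mul_integral (y' := derivWithin y (Ici 0))
    (φ := fun s => c₂ * w s - lam) (K := c₂ * M) ht.1 (hy.continuousOn.mono hat)
    (fun s hs => ((hy s (hat (Ioo_subset_Icc_self hs))).hasDerivWithinAt).hasDerivAt
      (Ici_mem_nhds (ha.trans_lt hs.1)))
    ((continuousOn_const.mul (hw.mono hat)).sub continuousOn_const) (hh.mono hat)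
    (fun s hs => hh0 s (hat hs))
    (fun s hs => (hexponent s hs).trans (by nlinarith [hs.2]))
    (fun s hs => by
      have hs0 := hat (Ioo_subset_Icc_self hs)
      have := mul_le_mul hlamc (hyz s hs0).2 (hyz s hs0).1 (hlam.trans hlamc)
      nlinarith [hineq s hs0])
  have hinth' : ∫ s in a..t, h s ≤ H :=
    (integral_mono_interval_of_continuousOn (hh.mono hab) (fun r hr => hh0 r (hab hr))
      le_rfl ht.1 ht.2).trans hinth
  calc y t ≤ exp (∫ r in a..t, (c₂ * w r - lam)) * y a + exp (c₂ * M) * ∫ s in a..t, h s :=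
        hgronwall
    _ ≤ exp (c₂ * M - lam * (t - a)) * y a + exp (c₂ * M) * H := by
      gcongr
      · exact (hyz a ha).1
      · simpa using hexponent a (left_mem_Icc.2 ht.1)

theorem add_mul_integral_le_of_derivWithin_le {c₁ c₂ M H C a b t : ℝ} {y z w h : ℝ → ℝ}
    (hc₂ : 0 ≤ c₂)
    (hy : DifferentiableOn ℝ y (Ici 0))
    (hz : ContinuousOn z (Ici 0))
    (hw : ContinuousOn w (Ici 0))
    (hh : ContinuousOn h (Ici 0))
    (hw0 : ∀ t : ℝ, 0 ≤ t → 0 ≤ w t)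
    (hh0 : ∀ t : ℝ, 0 ≤ t → 0 ≤ h t)
    (hineq : ∀ t : ℝ, 0 ≤ t →
      derivWithin y (Ici 0) t + c₁ * z t ≤ c₂ * w t * y t + h t)
    (ha : 0 ≤ a) (ht : t ∈ Icc a b)
    (hintw : ∫ s in a..b, w s ≤ M) (hinth : ∫ s in a..b, h s ≤ H)
    (hC : 0 ≤ C) (hyC : ∀ s ∈ Icc a b, y s ≤ C) :
    y t + c₁ * ∫ s in a..t, z s ≤ y a + c₂ * M * C + H := by
  have hab : Icc a b ⊆ Ici 0 := fun s hs => ha.trans hs.1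
  have hat : Icc a t ⊆ Ici 0 := fun s hs => ha.trans hs.1
  have hwi : IntervalIntegrable w volume a t := (hw.mono hat).intervalIntegrable_of_Icc ht.1
  have hhi : IntervalIntegrable h volume a t := (hh.mono hat).intervalIntegrable_of_Icc ht.1
  have hzi : IntervalIntegrable z volume a t := (hz.mono hat).intervalIntegrable_of_Icc ht.1
  have hftc : y t - y a ≤ ∫ s in a..t, (c₂ * C * w s + h s - c₁ * z s) := by
    refine sub_le_integral_of_hasDeriv_right_of_le ht.1 (hy.continuousOn.mono hat)
      (fun s hs => ((hy s (hat (Ioo_subset_Icc_self hs))).hasDerivWithinAt.hasDerivAt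
        (Ici_mem_nhds (ha.trans_lt hs.1))).hasDerivWithinAt)
      (((continuousOn_const.mul (hw.mono hat)).add (hh.mono hat)).sub
        (continuousOn_const.mul (hz.mono hat))).integrableOn_Icc fun s hs => ?_
    have hs0 := hat (Ioo_subset_Icc_self hs)
    have := mul_le_mul_of_nonneg_left (hyC s ⟨hs.1.le, hs.2.le.trans ht.2⟩)
      (mul_nonneg hc₂ (hw0 s hs0))
    nlinarith [hineq s hs0]
  rw [integral_sub ((hwi.const_mul _).add hhi) (hzi.const_mul _),
    integral_add (hwi.const_mul _) hhi, intervalIntegral.integral_const_mul,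
    intervalIntegral.integral_const_mul] at hftc
  have hintw' := (integral_mono_interval_of_continuousOn (hw.mono hab) (fun r hr => hw0 r (hab hr))
    le_rfl ht.1 ht.2).trans hintw
  have hinth' := (integral_mono_interval_of_continuousOn (hh.mono hab) (fun r hr => hh0 r (hab hr))
    le_rfl ht.1 ht.2).trans hinth
  have := mul_le_mul_of_nonneg_left hintw' (mul_nonneg hc₂ hC)
  linarith

theorem lemma34_41_core_general
    (c₁ c₂ T : ℝ) (hc₁ : 0 < c₁) (hc₂ : 0 < c₂) (hT : 0 < T)
    (hT2 : Real.exp (-c₁ * T / 2) ≤ 1 / 2)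
    (y z w h : ℝ → ℝ)
    (hy : DifferentiableOn ℝ y (Set.Ici 0))
    (hz : ContinuousOn z (Set.Ici 0))
    (hw : ContinuousOn w (Set.Ici 0))
    (hh : ContinuousOn h (Set.Ici 0))
    (hyz : ∀ t : ℝ, 0 ≤ t → 0 ≤ y t ∧ y t ≤ z t)
    (hw0 : ∀ t : ℝ, 0 ≤ t → 0 ≤ w t)
    (hh0 : ∀ t : ℝ, 0 ≤ t → 0 ≤ h t)
    (hineq : ∀ t : ℝ, 0 ≤ t →
      derivWithin y (Set.Ici 0) t + c₁ * z t ≤ c₂ * w t * y t + h t)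
    (M H : ℝ) (hH : 0 ≤ H)
    (hintw : ∀ k : ℕ, (∫ t in (k * T)..((k + 1 : ℕ) * T), w t) ≤ M)
    (hinth : ∀ k : ℕ, (∫ t in (k * T)..((k + 1 : ℕ) * T), h t) ≤ H)
    (hlarge : c₂ * M ≤ c₁ * T / 2)
    (B : ℝ) (hB : B = 2 * Real.exp (c₂ * M) * H + y 0) :
    (∀ k : ℕ, y (k * T) ≤ B) ∧
    (∀ t : ℝ, 0 ≤ t → y t ≤ Real.exp (c₂ * M) * (H + B)) ∧
    (∀ k : ℕ, ∀ t ∈ Set.Icc ((k : ℝ) * T) (((k : ℝ) + 1) * T),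
      y t + c₁ * (∫ s in ((k : ℝ) * T)..t, z s)
        ≤ c₂ * M * Real.exp (c₂ * M) * (H + B) + H + B) := by
  have hk0 (k : ℕ) : (0 : ℝ) ≤ k * T := by positivity
  have hintw' (k : ℕ) : ∫ t in (k * T)..((k + 1) * T), w t ≤ M := by exact_mod_cast hintw k
  have hinth' (k : ℕ) : ∫ t in (k * T)..((k + 1) * T), h t ≤ H := by exact_mod_cast hinth k
  have hperiod (k : ℕ) {t lam : ℝ} (ht : t ∈ Icc ((k : ℝ) * T) ((k + 1) * T)) (hlam : 0 ≤ lam)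
      (hlamc : lam ≤ c₁) :=
    le_exp_mul_add_exp_mul_of_derivWithin_le hc₂.le hy hw hh hyz hw0 hh0 hineq (hk0 k) ht
      (hintw' k) (hinth' k) hlam hlamc
  have hy0 := (hyz 0 le_rfl).1
  have hnodes (k : ℕ) : y (k * T) ≤ B := by
    induction k with
    | zero => simp only [Nat.cast_zero, zero_mul]; nlinarith [exp_pos (c₂ * M)]
    | succ k ih =>
      have hstep := hperiod k ⟨by nlinarith, le_rfl⟩ hc₁.le le_rfl
      have hhalf : exp (c₂ * M - c₁ * ((k + 1) * T - k * T)) ≤ 1 / 2 :=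
        (exp_le_exp.2 (by nlinarith)).trans hT2
      have := mul_le_mul_of_nonneg_right hhalf (hyz _ (hk0 k)).1
      push_cast
      linarith
  have hbound (t : ℝ) (ht : 0 ≤ t) : y t ≤ exp (c₂ * M) * (H + B) := by
    obtain ⟨k, hk⟩ := exists_nat_mem_Icc_mul hT ht
    have := hperiod k hk le_rfl hc₁.le
    simp only [zero_mul, sub_zero] at this
    nlinarith [hnodes k, exp_pos (c₂ * M)]
  refine ⟨hnodes, hbound, fun k t ht => ?_⟩
  have := add_mul_integral_le_of_derivWithin_le hc₂.le hy hz hw hh hw0 hh0 hineq (hk0 k) ht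
    (hintw' k) (hinth' k) (hy0.trans (hbound 0 le_rfl))
    (fun s hs => hbound s ((hk0 k).trans hs.1))
  linarith [hnodes k]

/-- Differential-inequality skeleton shared by Lemmas 3.4 and 4.1. -/
theorem lemma34_41_core
    (c₁ c₂ T : ℝ) (hc₁ : 0 < c₁) (hc₂ : 0 < c₂) (hT : 0 < T)
    (hT2 : Real.exp (-c₁ * T / 2) ≤ 1 / 2)
    (y z w h : ℝ → ℝ)
    (hy : DifferentiableOn ℝ y (Set.Ici 0))
    (hz : ContinuousOn z (Set.Ici 0))
    (hw : ContinuousOn w (Set.Ici 0))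
    (hh : ContinuousOn h (Set.Ici 0))
    (hyz : ∀ t : ℝ, 0 ≤ t → 0 ≤ y t ∧ y t ≤ z t)
    (hw0 : ∀ t : ℝ, 0 ≤ t → 0 ≤ w t)
    (hh0 : ∀ t : ℝ, 0 ≤ t → 0 ≤ h t)
    (hineq : ∀ t : ℝ, 0 ≤ t →
      derivWithin y (Set.Ici 0) t + c₁ * z t ≤ c₂ * w t * y t + h t)
    (M H : ℝ) (hM : 0 ≤ M) (hH : 0 ≤ H)
    (hintw : ∀ k : ℕ, (∫ t in (k * T)..((k + 1 : ℕ) * T), w t) ≤ M)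
    (hinth : ∀ k : ℕ, (∫ t in (k * T)..((k + 1 : ℕ) * T), h t) ≤ H)
    (hlarge : c₂ * M ≤ c₁ * T / 2)
    (B : ℝ) (hB : B = 2 * Real.exp (c₂ * M) * H + y 0) :
    (∀ k : ℕ, y (k * T) ≤ B) ∧
    (∀ t : ℝ, 0 ≤ t → y t ≤ Real.exp (c₂ * M) * (H + B)) ∧
    (∀ k : ℕ, ∀ t ∈ Set.Icc ((k : ℝ) * T) (((k : ℝ) + 1) * T),
      y t + c₁ * (∫ s in ((k : ℝ) * T)..t, z s)
        ≤ c₂ * M * Real.exp (c₂ * M) * (H + B) + H + B) :=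
  lemma34_41_core_general c₁ c₂ T hc₁ hc₂ hT hT2 y z w h hy hz hw hh hyz hw0 hh0 hineq M H hH hintw
    hinth hlarge B hB
end

section
/- Let c₁ > 0, c₃ ≥ 0 and γ > 0 satisfy c₃·γ² ≤ c₁/2. Let Y : ℝ → ℝ be differentiable and nonnegative on [0, ∞), let G : ℝ → ℝ be a function with G(t) ≤ c₁·γ/4 for all t ≥ 0, and suppose that Y'(t) ≤ −Y(t)·(c₁ − c₃·Y(t)²) + G(t) for all t ≥ 0 and that Y(0) ≤ γ. Then Y(t) ≤ γ for all t ≥ 0. -/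
/-!
At the level `Y = γ` the right-hand side of the differential inequality is at most
`-γ (c₁ - c₃ γ²) + c₁ γ / 4 ≤ -c₁ γ / 2 + c₁ γ / 4 < 0`, so `Y` is strictly decreasing whenever it
touches `γ` and can never cross this level: the constant `γ` is a barrier for `Y`.
-/

open Real Set

theorem le_of_derivWithin_neg_of_eq {f : ℝ → ℝ} {a B : ℝ}
    (hf : DifferentiableOn ℝ f (Ici a)) (ha : f a ≤ B)
    (hB : ∀ x, a ≤ x → f x = B → derivWithin f (Ici a) x < 0) :
    ∀ x, a ≤ x → f x ≤ B := by
  intro x hx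
  refine image_le_of_deriv_right_lt_deriv_boundary (f' := derivWithin f (Ici a))
    (B := fun _ => B) (B' := fun _ => 0) (hf.continuousOn.mono Icc_subset_Ici_self)
    (fun y hy => ((hf y hy.1).hasDerivWithinAt).mono (Ici_subset_Ici.2 hy.1)) ha
    (fun y => hasDerivAt_const y B) (fun y hy => hB y hy.1) ⟨hx, le_rfl⟩

theorem neg_mul_sub_mul_sq_add_neg {c₁ c₃ γ g : ℝ} (hc₁ : 0 < c₁) (hγ : 0 < γ)
    (hsmall : c₃ * γ ^ 2 ≤ c₁ / 2) (hg : g ≤ c₁ * γ / 4) :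
    -γ * (c₁ - c₃ * γ ^ 2) + g < 0 := by
  have hdamp : γ * (c₁ / 2) ≤ γ * (c₁ - c₃ * γ ^ 2) :=
    mul_le_mul_of_nonneg_left (by linarith) hγ.le
  nlinarith [mul_pos hc₁ hγ]

theorem barrier_invariance_general
    (c₁ c₃ γ : ℝ) (hc₁ : 0 < c₁) (hγ : 0 < γ)
    (hsmall : c₃ * γ ^ 2 ≤ c₁ / 2)
    (Y G : ℝ → ℝ)
    (hY : DifferentiableOn ℝ Y (Set.Ici 0))
    (hG : ∀ t : ℝ, 0 ≤ t → G t ≤ c₁ * γ / 4)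
    (hineq : ∀ t : ℝ, 0 ≤ t →
      derivWithin Y (Set.Ici 0) t ≤ -Y t * (c₁ - c₃ * (Y t) ^ 2) + G t)
    (hinit : Y 0 ≤ γ) :
    ∀ t : ℝ, 0 ≤ t → Y t ≤ γ := by
  refine le_of_derivWithin_neg_of_eq hY hinit fun t ht hYt => ?_
  calc derivWithin Y (Ici 0) t ≤ -Y t * (c₁ - c₃ * (Y t) ^ 2) + G t := hineq t ht
    _ < 0 := hYt ▸ neg_mul_sub_mul_sq_add_neg hc₁ hγ hsmall (hG t ht)

/-- Barrier (invariance) argument proving Lemma 4.2. -/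
theorem barrier_invariance
    (c₁ c₃ γ : ℝ) (hc₁ : 0 < c₁) (hc₃ : 0 ≤ c₃) (hγ : 0 < γ)
    (hsmall : c₃ * γ ^ 2 ≤ c₁ / 2)
    (Y G : ℝ → ℝ)
    (hY : DifferentiableOn ℝ Y (Set.Ici 0))
    (hY0 : ∀ t : ℝ, 0 ≤ t → 0 ≤ Y t)
    (hG : ∀ t : ℝ, 0 ≤ t → G t ≤ c₁ * γ / 4)
    (hineq : ∀ t : ℝ, 0 ≤ t →
      derivWithin Y (Set.Ici 0) t ≤ -Y t * (c₁ - c₃ * (Y t) ^ 2) + G t)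
    (hinit : Y 0 ≤ γ) :
    ∀ t : ℝ, 0 ≤ t → Y t ≤ γ :=
  barrier_invariance_general c₁ c₃ γ hc₁ hγ hsmall Y G hY hG hineq hinit
end
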